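/- Fix α_E ∈ (0,1), α_C = 1 − α_E, η > 0, and g(d) = α_E·exp(η d)/(α_E·exp(η d) + α_C). For every d with |d| ≤ B there exists a constant K > 0 (depending only on α_E, α_C, B) such that g(d) ≥ g(0) + α_E·α_C·η·d − K·η²·B². -/
import Mathlib


/-- Quantitative Taylor bound for the weight-share update: with
`g(d) = αE·e^{ηd}/(αE·e^{ηd} + αC)`, there is `K > 0` (depending only on `αE`, `αC`, `B`)
such that for every `η > 0` and every `d` with `|d| ≤ B`,
`g(d) ≥ g(0) + αE·αC·η·d − K·η²·B²`. -/
theorem weight_share_taylor_bound (αE B : ℝ) (h0 : 0 < αE) (h1 : αE < 1) (hB : 0 < B) :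
    ∃ K > (0 : ℝ), ∀ η > (0 : ℝ), ∀ d : ℝ, |d| ≤ B →
      αE * Real.exp (η * d) / (αE * Real.exp (η * d) + (1 - αE)) ≥
        αE * Real.exp (η * 0) / (αE * Real.exp (η * 0) + (1 - αE))
          + αE * (1 - αE) * η * d - K * η ^ 2 * B ^ 2 := by
  refine ⟨1, one_pos, ?_⟩
  intro η hη d hd
  have hC : 0 < 1 - αE := by linarith
  set t : ℝ := η * d with ht
  have hx : 0 < Real.exp t := Real.exp_pos t
  have hD : 0 < αE * Real.exp t + (1 - αE) := by positivity
  have hg0 : αE * Real.exp (η * 0) / (αE * Real.exp (η * 0) + (1 - αE)) = αE := by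
    rw [mul_zero, Real.exp_zero, mul_one, show αE + (1 - αE) = (1:ℝ) by ring, div_one]
  rw [hg0]
  -- key pointwise inequality: g(t) ≥ αE + αE(1-αE)t - t²
  have key : αE + αE * (1 - αE) * t - t ^ 2 ≤
      αE * Real.exp t / (αE * Real.exp t + (1 - αE)) := by
    rw [le_div_iff₀ hD]
    have h1' : 1 + t ≤ Real.exp t := by linarith [Real.add_one_le_exp t]
    rcases le_or_gt 0 t with htpos | htneg
    · have h2 : Real.exp t - 1 ≤ t * Real.exp t := by
        have h3 := Real.add_one_le_exp (-t)
        have hme : Real.exp (-t) * Real.exp t = 1 := by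
          rw [← Real.exp_add]; simp
        nlinarith [Real.exp_pos t]
      have q1 : 0 ≤ αE * (1 - αE) * (Real.exp t - 1 - t) :=
        mul_nonneg (mul_nonneg h0.le hC.le) (by linarith)
      have q2 : 0 ≤ αE ^ 2 * (1 - αE) * (t ^ 2 * Real.exp t - t * (Real.exp t - 1)) := by
        have : t * (Real.exp t - 1) ≤ t ^ 2 * Real.exp t := by nlinarith
        have h5 : 0 ≤ αE ^ 2 * (1 - αE) := by positivity
        nlinarith
      have q3 : 0 ≤ t ^ 2 * Real.exp t * (αE - αE ^ 2 * (1 - αE)) :=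
        mul_nonneg (mul_nonneg (sq_nonneg t) hx.le) (by nlinarith)
      have q4 : 0 ≤ t ^ 2 * (1 - αE) := mul_nonneg (sq_nonneg t) hC.le
      nlinarith [q1, q2, q3, q4]
    · have h2 : t * (Real.exp t - 1) ≤ t ^ 2 := by nlinarith
      have q1 : 0 ≤ αE * (1 - αE) * (Real.exp t - 1 - t) :=
        mul_nonneg (mul_nonneg h0.le hC.le) (by linarith)
      have q2 : 0 ≤ αE ^ 2 * (1 - αE) * (t ^ 2 - t * (Real.exp t - 1)) := by
        have h5 : 0 ≤ αE ^ 2 * (1 - αE) := by positivity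
        nlinarith
      have q3 : 0 ≤ t ^ 2 * (αE * Real.exp t) := by positivity
      have hA2 : αE ^ 2 ≤ αE := by nlinarith [mul_nonneg h0.le hC.le]
      have q4 : 0 ≤ t ^ 2 * ((1 - αE) * (1 - αE ^ 2)) :=
        mul_nonneg (sq_nonneg t) (mul_nonneg hC.le (by linarith))
      nlinarith [q1, q2, q3, q4]
  have hd2 : d ^ 2 ≤ B ^ 2 := by
    have := abs_le.mp hd
    nlinarith [abs_nonneg d]
  have ht2 : t ^ 2 ≤ η ^ 2 * B ^ 2 := by
    rw [ht, mul_pow]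
    nlinarith [sq_nonneg η]
  calc αE + αE * (1 - αE) * η * d - 1 * η ^ 2 * B ^ 2
      ≤ αE + αE * (1 - αE) * t - t ^ 2 := by rw [ht]; nlinarith
    _ ≤ _ := key
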